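/- Every 3-γc-critical graph G satisfies α(G) ≤ κ(G) + 2, where α is the independence number and κ is the vertex connectivity. -/

import Mathlib

open SimpleGraph Finset

variable {V : Type*}

/-- The graph `G` with the extra edge `uv` added. -/
def SimpleGraph.addEdge (G : SimpleGraph V) (u v : V) : SimpleGraph V :=
  G ⊔ SimpleGraph.fromEdgeSet {s(u, v)}

/-- `D` is a connected dominating set of `G`. -/
def SimpleGraph.IsCDS (G : SimpleGraph V) (D : Set V) : Prop :=
  (∀ v : V, v ∈ D ∨ ∃ u ∈ D, G.Adj u v) ∧ (G.induce D).Connected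

/-- The connected domination number. -/
noncomputable def SimpleGraph.cdn [Fintype V] (G : SimpleGraph V) : ℕ :=
  sInf {n | ∃ D : Finset V, D.card = n ∧ G.IsCDS ↑D}

/-- `G` is a `3`-`γ_c`-critical graph. -/
def SimpleGraph.IsCritical3 [Fintype V] (G : SimpleGraph V) : Prop :=
  G.Connected ∧ G.cdn = 3 ∧
    ∀ u v : V, u ≠ v → ¬G.Adj u v → (G.addEdge u v).cdn < 3

/-- `s` is an independent set of `G`. -/
def SimpleGraph.IsIndepSet' (G : SimpleGraph V) (s : Set V) : Prop :=
  s.Pairwise (fun a b => ¬G.Adj a b)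

/-- The independence number. -/
noncomputable def SimpleGraph.indepNum' [Fintype V] (G : SimpleGraph V) : ℕ :=
  sSup {n | ∃ s : Finset V, G.IsIndepSet' ↑s ∧ s.card = n}

/-- `S` is a vertex cut: removing it leaves a non-connected graph. -/
def SimpleGraph.IsVertexCut [Fintype V] (G : SimpleGraph V) (S : Finset V) : Prop :=
  ¬(G.induce ((↑S : Set V)ᶜ)).Connected

/-- The vertex connectivity: minimum size of a vertex cut. -/
noncomputable def SimpleGraph.conn [Fintype V] (G : SimpleGraph V) : ℕ :=
  sInf {n | ∃ S : Finset V, S.card = n ∧ G.IsVertexCut S}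

/-!
Take an independent set `A` and a minimum vertex cut `S` of a 3-`γ_c`-critical graph `G`.
For distinct `a, b ∈ A` with a third vertex `c ∈ A`, adding the edge `ab` yields a connected
dominating set of size at most two. It is not one of `G`, and it has to dominate `c`, so it is
an edge `{p, w}` with `{p, q} = {a, b}` and `w ∉ {a, b}`; then `{p, w}` dominates `G - q` and
`w ≁ q`.

If `w ∈ S`, then `w` is adjacent to every vertex of `A - S` except `q`, and `w` determines `q`:
at most `|S - A|` vertices of `A - S` arise this way. Otherwise every vertex of `G - S` is
reachable from `p` or from `q` inside `G - S`, and three vertices of `A - S` that all arise this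
way would make `G - S` connected. Hence `|A - S| ≤ |S - A| + 2`, i.e. `|A| ≤ |S| + 2`.
-/

namespace SimpleGraph

variable {G : SimpleGraph V} {a b : V}

/-- `{p, w}` is a connected dominating set of `G - q`. -/
def IsDominatingEdgeMissing (G : SimpleGraph V) (p w q : V) : Prop :=
  G.Adj p w ∧ ¬G.Adj w q ∧ ∀ v, v ≠ q → v = p ∨ v = w ∨ G.Adj p v ∨ G.Adj w v

lemma addEdge_comm (G : SimpleGraph V) (a b : V) : G.addEdge a b = G.addEdge b a := by
  simp [addEdge, Sym2.eq_swap]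

lemma addEdge_adj {u v : V} :
    (G.addEdge a b).Adj u v ↔ G.Adj u v ∨ u ≠ v ∧ (u = a ∧ v = b ∨ u = b ∧ v = a) := by
  simp only [addEdge, sup_adj, fromEdgeSet_adj, Set.mem_singleton_iff, Sym2.eq_iff]
  tauto

lemma induce_addEdge_of_notMem {s : Set V} (hb : b ∉ s) :
    (G.addEdge a b).induce s = G.induce s := by
  ext ⟨u, hu⟩ ⟨v, hv⟩
  simp only [comap_adj, Function.Embedding.subtype_apply, addEdge_adj]
  have : u ≠ b := by rintro rfl; exact hb hu
  have : v ≠ b := by rintro rfl; exact hb hv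
  tauto

lemma IsCDS.of_addEdge {D : Set V} (hD : (G.addEdge a b).IsCDS D) (hb : b ∉ D)
    (hdom : ∃ u ∈ D, G.Adj u b) : G.IsCDS D := by
  refine ⟨fun v => ?_, induce_addEdge_of_notMem hb ▸ hD.2⟩
  by_cases hvb : v = b
  · exact hvb ▸ Or.inr hdom
  rcases hD.1 v with hv | ⟨u, hu, huv⟩
  · exact Or.inl hv
  · refine Or.inr ⟨u, hu, ?_⟩
    rcases addEdge_adj.1 huv with h | ⟨-, ⟨-, rfl⟩ | ⟨rfl, -⟩⟩
    exacts [h, (hvb rfl).elim, (hb hu).elim]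

lemma adj_of_induce_pair_connected {u v : V} (huv : u ≠ v)
    (h : (G.induce {u, v}).Connected) : G.Adj u v := by
  obtain ⟨p⟩ := h.preconnected ⟨u, by simp⟩ ⟨v, by simp⟩
  have hadj : G.Adj u p.snd := p.adj_snd (p.not_nil_of_ne (by simpa using huv))
  rcases p.snd.2 with h | h
  · exact absurd h hadj.ne'
  · rwa [← Set.mem_singleton_iff.1 h]

lemma IsDominatingEdgeMissing.notMem {A : Finset V} {p w q : V}
    (h : G.IsDominatingEdgeMissing p w q) (hA : G.IsIndepSet' ↑A) (hp : p ∈ A) : w ∉ A :=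
  fun hw => hA hp hw h.1.ne h.1

lemma IsDominatingEdgeMissing.adj_iff_ne {A : Finset V} {p w q c : V}
    (h : G.IsDominatingEdgeMissing p w q) (hA : G.IsIndepSet' ↑A) (hp : p ∈ A) (hc : c ∈ A) :
    G.Adj w c ↔ c ≠ q := by
  refine ⟨fun hwc hcq => h.2.1 (hcq ▸ hwc), fun hcq => ?_⟩
  rcases h.2.2 c hcq with rfl | rfl | hpc | hwc
  · exact h.1.symm
  · exact absurd hc (h.notMem hA hp)
  · exact absurd hpc (hA hp hc hpc.ne)
  · exact hwc

lemma IsDominatingEdgeMissing.reachable_or_reachable {T : Set V} {p w q : V}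
    (h : G.IsDominatingEdgeMissing p w q) (hp : p ∈ T) (hw : w ∈ T) (hq : q ∈ T) (v : T) :
    (G.induce T).Reachable ⟨p, hp⟩ v ∨ (G.induce T).Reachable ⟨q, hq⟩ v := by
  obtain ⟨v, hv⟩ := v
  have hpw : (G.induce T).Adj ⟨p, hp⟩ ⟨w, hw⟩ := h.1
  by_cases hvq : v = q
  · subst hvq
    exact Or.inr .rfl
  rcases h.2.2 v hvq with rfl | rfl | hpv | hwv
  · exact Or.inl .rfl
  · exact Or.inl hpw.reachable
  · exact Or.inl (Adj.reachable (G := G.induce T) (v := ⟨v, hv⟩) hpv)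
  · exact Or.inl (hpw.reachable.trans (Adj.reachable (G := G.induce T) (v := ⟨v, hv⟩) hwv))

lemma connected_of_forall_reachable_or_reachable {W : Type*} {H : SimpleGraph W} {x y z : W}
    (hxy : ∀ v, H.Reachable x v ∨ H.Reachable y v)
    (hxz : ∀ v, H.Reachable x v ∨ H.Reachable z v)
    (hyz : ∀ v, H.Reachable y v ∨ H.Reachable z v) : H.Connected := by
  rw [connected_iff_exists_forall_reachable]
  rcases hxy z with h | h
  · exact ⟨x, fun v => (hxz v).elim id h.trans⟩
  · exact ⟨y, fun v => (hyz v).elim id h.trans⟩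

lemma card_le_of_forall_exists_adj_iff_ne {Q W : Finset V}
    (h : ∀ q ∈ Q, ∃ w ∈ W, ∀ c ∈ Q, G.Adj w c ↔ c ≠ q) : #Q ≤ #W := by
  refine card_le_card_of_forall_subsingleton (fun q w => ∀ c ∈ Q, G.Adj w c ↔ c ≠ q) h ?_
  rintro w - q₁ ⟨hq₁, h₁⟩ q₂ ⟨-, h₂⟩
  by_contra hne
  exact ((h₁ q₁ hq₁).not.2 (not_not.2 rfl)) ((h₂ q₁ hq₁).2 hne)

lemma isDominatingEdgeMissing_of_isCDS_addEdge {D : Finset V} {w : V}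
    (hD : (G.addEdge a b).IsCDS ↑D) (hnot : ¬G.IsCDS ↑D) (hcard : #D ≤ 2)
    (ha : a ∈ D) (hw : w ∈ D) (hwa : w ≠ a) (hwb : w ≠ b) (hab : a ≠ b) :
    G.IsDominatingEdgeMissing a w b := by
  classical
  obtain rfl : D = {a, w} :=
    (eq_of_subset_of_card_le (insert_subset ha (singleton_subset_iff.2 hw))
      (by rwa [card_pair hwa.symm])).symm
  have hb : b ∉ (↑({a, w} : Finset V) : Set V) := by simp [hab.symm, hwb.symm]
  have hconn := hD.2
  rw [induce_addEdge_of_notMem hb, coe_pair] at hconn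
  refine ⟨adj_of_induce_pair_connected hwa.symm hconn,
    fun hwb' => hnot (hD.of_addEdge hb ⟨w, by simp, hwb'⟩), fun v hvb => ?_⟩
  rcases hD.1 v with hv | ⟨u, hu, huv⟩
  · simp only [coe_insert, coe_singleton, Set.mem_insert_iff, Set.mem_singleton_iff] at hv
    tauto
  · simp only [coe_insert, coe_singleton, Set.mem_insert_iff, Set.mem_singleton_iff] at hu
    have : u ≠ b := by rintro rfl; tauto
    rcases addEdge_adj.1 huv with h | h
    · rcases hu with rfl | rfl <;> tauto
    · tauto

section Fintype

variable [Fintype V]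

lemma cdn_le_card {D : Finset V} (hD : G.IsCDS ↑D) : G.cdn ≤ #D :=
  Nat.sInf_le ⟨D, rfl, hD⟩

lemma Connected.exists_isCDS_card_eq_cdn (hG : G.Connected) :
    ∃ D : Finset V, #D = G.cdn ∧ G.IsCDS ↑D := by
  have hne : {n | ∃ D : Finset V, #D = n ∧ G.IsCDS ↑D}.Nonempty := by
    refine ⟨_, univ, rfl, fun v => Or.inl (mem_univ v), ?_⟩
    rw [coe_univ]
    exact G.induceUnivIso.connected_iff.2 hG
  exact Nat.sInf_mem hne

lemma exists_isVertexCut_card_eq_conn (G : SimpleGraph V) :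
    ∃ S : Finset V, #S = G.conn ∧ G.IsVertexCut S := by
  have hne : {n | ∃ S : Finset V, #S = n ∧ G.IsVertexCut S}.Nonempty := by
    refine ⟨_, univ, rfl, fun h => ?_⟩
    obtain ⟨⟨v, hv⟩⟩ := h.nonempty
    simp at hv
  exact Nat.sInf_mem hne

lemma indepNum'_le {n : ℕ} (h : ∀ A : Finset V, G.IsIndepSet' ↑A → #A ≤ n) :
    G.indepNum' ≤ n :=
  csSup_le ⟨0, ∅, by simp [IsIndepSet'], rfl⟩ (by rintro _ ⟨A, hA, rfl⟩; exact h A hA)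

lemma IsCritical3.not_isCDS (hG : G.IsCritical3) {D : Finset V} (hD : #D ≤ 2) :
    ¬G.IsCDS ↑D := fun h => by
  have := cdn_le_card h
  have := hG.2.1
  omega

lemma IsCritical3.exists_isCDS_addEdge (hG : G.IsCritical3) (hab : a ≠ b) (hnab : ¬G.Adj a b) :
    ∃ D : Finset V, #D ≤ 2 ∧ (G.addEdge a b).IsCDS ↑D := by
  have hconn : (G.addEdge a b).Connected := hG.1.mono le_sup_left
  obtain ⟨D, hD, hCDS⟩ := hconn.exists_isCDS_card_eq_cdn
  have := hG.2.2 a b hab hnab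
  exact ⟨D, by omega, hCDS⟩

lemma IsCritical3.exists_isDominatingEdgeMissing (hG : G.IsCritical3) {c : V} (hab : a ≠ b)
    (hnab : ¬G.Adj a b) (hca : c ≠ a) (hcb : c ≠ b) (hac : ¬G.Adj a c) (hbc : ¬G.Adj b c) :
    (∃ w, G.IsDominatingEdgeMissing a w b) ∨ ∃ w, G.IsDominatingEdgeMissing b w a := by
  obtain ⟨D, hcard, hD⟩ := hG.exists_isCDS_addEdge hab hnab
  have hnot := hG.not_isCDS hcard
  -- `D` dominates `c`, which has no neighbour in `{a, b}`
  obtain ⟨w, hw, hwa, hwb⟩ : ∃ w ∈ D, w ≠ a ∧ w ≠ b := by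
    rcases hD.1 c with hc | ⟨u, hu, huc⟩
    · exact ⟨c, hc, hca, hcb⟩
    · refine ⟨u, hu, ?_, ?_⟩ <;> rintro rfl <;> rcases addEdge_adj.1 huc with h | h <;> tauto
  by_cases ha : a ∈ D
  · exact .inl ⟨w, isDominatingEdgeMissing_of_isCDS_addEdge hD hnot hcard ha hw hwa hwb hab⟩
  by_cases hb : b ∈ D
  · rw [addEdge_comm] at hD
    exact .inr ⟨w, isDominatingEdgeMissing_of_isCDS_addEdge hD hnot hcard hb hw hwb hwa hab.symm⟩
  exfalso
  rcases hD.1 b with hb' | ⟨u, hu, hub⟩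
  · exact hb hb'
  · refine hnot (hD.of_addEdge hb ⟨u, hu, ?_⟩)
    rcases addEdge_adj.1 hub with h | ⟨-, ⟨rfl, -⟩ | ⟨-, rfl⟩⟩
    exacts [h, (ha hu).elim, (hab rfl).elim]

lemma IsCritical3.card_le_two_of_isVertexCut [DecidableEq V] (hG : G.IsCritical3)
    {A S B : Finset V} (hA : G.IsIndepSet' ↑A) (hS : G.IsVertexCut S)
    (hB : ∀ q ∈ B, q ∈ A ∧ q ∉ S ∧ ¬∃ w ∈ S \ A, ∀ c ∈ A \ S, G.Adj w c ↔ c ≠ q) :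
    #B ≤ 2 := by
  set T : Set V := (↑S : Set V)ᶜ
  have hreach : ∀ p w q (hp : p ∈ B) (hq : q ∈ B), G.IsDominatingEdgeMissing p w q →
      ∀ v : T, (G.induce T).Reachable ⟨p, (hB p hp).2.1⟩ v ∨
        (G.induce T).Reachable ⟨q, (hB q hq).2.1⟩ v := by
    intro p w q hp hq h
    have hpA := (hB p hp).1
    have hwS : w ∉ S := fun hwS => (hB q hq).2.2 ⟨w, mem_sdiff.2 ⟨hwS, h.notMem hA hpA⟩,
      fun c hc => h.adj_iff_ne hA hpA (mem_sdiff.1 hc).1⟩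
    exact h.reachable_or_reachable _ hwS _
  have hpair : ∀ x y z (hx : x ∈ B) (hy : y ∈ B), z ∈ B → x ≠ y → z ≠ x → z ≠ y →
      ∀ v : T, (G.induce T).Reachable ⟨x, (hB x hx).2.1⟩ v ∨
        (G.induce T).Reachable ⟨y, (hB y hy).2.1⟩ v := by
    intro x y z hx hy hz hxy hzx hzy
    have hind : ∀ {u v}, u ∈ B → v ∈ B → u ≠ v → ¬G.Adj u v :=
      fun hu hv huv => hA (hB _ hu).1 (hB _ hv).1 huv
    rcases hG.exists_isDominatingEdgeMissing hxy (hind hx hy hxy) hzx hzy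
      (hind hx hz hzx.symm) (hind hy hz hzy.symm) with ⟨w, h⟩ | ⟨w, h⟩
    · exact hreach x w y hx hy h
    · exact fun v => (hreach y w x hy hx h v).symm
  by_contra! h3
  obtain ⟨x, y, z, hx, hy, hz, hxy, hxz, hyz⟩ := two_lt_card_iff.1 h3
  exact hS <| connected_of_forall_reachable_or_reachable
    (hpair x y z hx hy hz hxy hxz.symm hyz.symm) (hpair x z y hx hz hy hxz hxy.symm hyz)
    (hpair y z x hy hz hx hyz hxy hxz)

lemma IsCritical3.card_le_card_add_two (hG : G.IsCritical3) {A S : Finset V}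
    (hA : G.IsIndepSet' ↑A) (hS : G.IsVertexCut S) : #A ≤ #S + 2 := by
  classical
  set Q := {q ∈ A \ S | ∃ w ∈ S \ A, ∀ c ∈ A \ S, G.Adj w c ↔ c ≠ q}
  have hQA : Q ⊆ A \ S := filter_subset _ _
  have hQ : #Q ≤ #(S \ A) := card_le_of_forall_exists_adj_iff_ne fun q hq => by
    obtain ⟨w, hw, hwc⟩ := (mem_filter.1 hq).2
    exact ⟨w, hw, fun c hc => hwc c (hQA hc)⟩
  have hrest : #((A \ S) \ Q) ≤ 2 := hG.card_le_two_of_isVertexCut hA hS fun q hq => by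
    obtain ⟨hqAS, hqQ⟩ := mem_sdiff.1 hq
    exact ⟨(mem_sdiff.1 hqAS).1, (mem_sdiff.1 hqAS).2, fun h => hqQ (mem_filter.2 ⟨hqAS, h⟩)⟩
  calc #A = #((A \ S) \ Q) + #Q + #(A ∩ S) := by
        rw [card_sdiff_add_card_eq_card hQA, card_sdiff_add_card_inter]
    _ ≤ 2 + #(S \ A) + #(S ∩ A) := by rw [inter_comm]; omega
    _ = #S + 2 := by rw [add_assoc, card_sdiff_add_card_inter]; ring

end Fintype

end SimpleGraph

theorem stmt_4 {V : Type*} [Fintype V] (G : SimpleGraph V)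
    (hG : G.IsCritical3) :
    G.indepNum' ≤ G.conn + 2 := by
  obtain ⟨S, hS, hcut⟩ := G.exists_isVertexCut_card_eq_conn
  exact indepNum'_le fun A hA => hS ▸ hG.card_le_card_add_two hA hcut
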